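/- Let b₁,…,bₙ be linearly independent in ℝ^k with Gram–Schmidt vectors b₁*,…,bₙ*. Fix i < n and let B' be the family obtained by swapping bᵢ and b_{i+1}. Then the i-th Gram determinant of B' satisfies det(B'ᵢᵀB'ᵢ)/det(BᵢᵀBᵢ) = (‖b_{i+1}*‖² + μ_{i+1,i}²‖bᵢ*‖²)/‖bᵢ*‖², where μ_{i+1,i} = ⟨b_{i+1}, bᵢ*⟩/⟨bᵢ*, bᵢ*⟩. -/

import Mathlib

/-!
The Gram determinant of `b₁, …, bₘ` is `∏ ‖bⱼ*‖²`, because `b` is obtained from the orthogonal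
family `b*` by a unitriangular change of basis. Swapping `bᵢ` and `bᵢ₊₁` leaves the Gram–Schmidt
vectors of index `< i` unchanged, and the new `i`-th one is `bᵢ₊₁* + μ bᵢ*` (the part of `bᵢ₊₁`
orthogonal to `b₁, …, bᵢ₋₁`). So the two determinants share all factors but the last, and the
new last factor is `‖bᵢ₊₁*‖² + μ² ‖bᵢ*‖²` by Pythagoras.
-/

open Finset RealInnerProductSpace

noncomputable section

instance (n : ℕ) : WellFoundedLT (Fin n) := Finite.to_wellFoundedLT

/-- the matrix of the first \`m\` columns -/
def seg (k n : ℕ) (b : Fin n → EuclideanSpace ℝ (Fin k)) (m : ℕ) (hm : m ≤ n) :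
    Matrix (Fin k) (Fin m) ℝ :=
  Matrix.of fun r j => b (Fin.castLE hm j) r

/-- the size of a basis: the product of the Gram determinants of all initial segments -/
def S (k n : ℕ) (b : Fin n → EuclideanSpace ℝ (Fin k)) : ℝ :=
  ∏ i : Fin n, ((seg k n b (i + 1) i.isLt).transpose * seg k n b (i + 1) i.isLt).det

open Matrix InnerProductSpace

theorem Finset.Iio_eq_insert_of_covBy {ι : Type*} [LinearOrder ι] [LocallyFiniteOrderBot ι]
    [DecidableEq ι] {a b : ι} (hab : a ⋖ b) : Iio b = insert a (Iio a) := by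
  rw [Iio_insert]
  exact coe_injective (by simpa using hab.Iio_eq)

section GramSchmidt

variable {𝕜 E : Type*} [RCLike 𝕜] [NormedAddCommGroup E] [InnerProductSpace 𝕜 E]

variable {ι : Type*} [LinearOrder ι] [LocallyFiniteOrderBot ι] [WellFoundedLT ι]

theorem InnerProductSpace.gramSchmidt_congr {f f' : ι → E} {j : ι} (h : ∀ l ≤ j, f l = f' l) :
    gramSchmidt 𝕜 f j = gramSchmidt 𝕜 f' j := by
  induction j using WellFoundedLT.induction with
  | _ j ih =>
    rw [gramSchmidt_def, gramSchmidt_def, h j le_rfl]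
    refine congrArg _ (sum_congr rfl fun l hl => ?_)
    rw [ih l (mem_Iio.1 hl) fun x hx => h x (hx.trans (mem_Iio.1 hl).le)]

theorem InnerProductSpace.gramSchmidt_comp_swap_of_lt [DecidableEq ι] (f : ι → E) {a b j : ι}
    (hab : a < b) (hj : j < a) : gramSchmidt 𝕜 (f ∘ Equiv.swap a b) j = gramSchmidt 𝕜 f j :=
  gramSchmidt_congr fun l hl => by
    rw [Function.comp_apply, Equiv.swap_apply_of_ne_of_ne (hl.trans_lt hj).ne
      (hl.trans_lt (hj.trans hab)).ne]

theorem InnerProductSpace.gramSchmidt_comp_swap_left [DecidableEq ι] (f : ι → E) {a b : ι}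
    (hab : a ⋖ b) :
    gramSchmidt 𝕜 (f ∘ Equiv.swap a b) a = gramSchmidt 𝕜 f b +
      (inner 𝕜 (gramSchmidt 𝕜 f a) (f b) / (‖gramSchmidt 𝕜 f a‖ : 𝕜) ^ 2) • gramSchmidt 𝕜 f a := by
  have hswap := gramSchmidt_def'' 𝕜 (f ∘ Equiv.swap a b) a
  have hf := gramSchmidt_def'' 𝕜 f b
  rw [Iio_eq_insert_of_covBy hab, sum_insert notMem_Iio_self] at hf
  rw [Function.comp_apply, Equiv.swap_apply_left,
    sum_congr rfl fun l hl => by rw [gramSchmidt_comp_swap_of_lt f hab.lt (mem_Iio.1 hl)]] at hswap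
  linear_combination (norm := module) hf - hswap

theorem InnerProductSpace.gramSchmidt_comp_castLE {n m : ℕ} (f : Fin n → E) (h : m ≤ n)
    (j : Fin m) : gramSchmidt 𝕜 (f ∘ Fin.castLE h) j = gramSchmidt 𝕜 f (Fin.castLE h j) := by
  induction j using WellFoundedLT.induction with
  | _ j ih =>
    rw [gramSchmidt_def, gramSchmidt_def, Fin.sum_Iio_castLE]
    refine congrArg _ (sum_congr rfl fun l hl => ?_)
    rw [ih l (mem_Iio.1 hl), Function.comp_apply]

end GramSchmidt

section Gram

variable {E : Type*} [NormedAddCommGroup E] [InnerProductSpace ℝ E]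

theorem Matrix.gram_sum_smul {ι κ : Type*} [Fintype κ] (g : κ → E) (U : Matrix κ ι ℝ) :
    gram ℝ (fun j => ∑ l, U l j • g l) = Uᵀ * gram ℝ g * U := by
  ext a c
  simp only [gram_apply, mul_apply, transpose_apply, sum_inner, inner_sum, real_inner_smul_left,
    real_inner_smul_right, sum_mul]
  exact sum_congr rfl fun l _ => sum_congr rfl fun l' _ => by ring

theorem Matrix.gram_eq_diagonal_of_pairwise {ι : Type*} [DecidableEq ι] {g : ι → E}
    (hg : Pairwise fun a c => ⟪g a, g c⟫ = 0) : gram ℝ g = diagonal fun j => ‖g j‖ ^ 2 := by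
  ext a c
  obtain rfl | hac := eq_or_ne a c
  · simp
  · simp [hg hac, hac]

variable {ι : Type*} [Fintype ι] [LinearOrder ι] [LocallyFiniteOrderBot ι]

theorem Matrix.det_gram_of_eq_add_sum_Iio {v g : ι → E} (c : ι → ι → ℝ)
    (hg : Pairwise fun a c => ⟪g a, g c⟫ = 0) (hv : ∀ j, v j = g j + ∑ l ∈ Iio j, c l j • g l) :
    (gram ℝ v).det = ∏ j, ‖g j‖ ^ 2 := by
  classical
  set U : Matrix ι ι ℝ := 1 + of fun l j => if l < j then c l j else 0
  have hU : U.det = 1 := by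
    rw [det_of_isUpperTriangular]
    · simp [U]
    · intro a b (hab : b < a)
      simp [U, hab.ne', not_lt_of_gt hab]
  have hvU : v = fun j => ∑ l, U l j • g l := by
    funext j
    simp only [U, add_apply, one_apply, of_apply, add_smul, ite_smul, one_smul, zero_smul,
      sum_add_distrib, sum_ite_eq', mem_univ, if_true, ← sum_filter, filter_gt_eq_Iio, hv j]
  rw [hvU, gram_sum_smul, det_mul, det_mul, det_transpose, hU, gram_eq_diagonal_of_pairwise hg,
    det_diagonal]
  ring

theorem Matrix.det_gram_eq_prod_norm_sq_gramSchmidt [WellFoundedLT ι] (v : ι → E) :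
    (gram ℝ v).det = ∏ j, ‖gramSchmidt ℝ v j‖ ^ 2 :=
  det_gram_of_eq_add_sum_Iio _ (gramSchmidt_pairwise_orthogonal ℝ v) fun j => by
    simpa using gramSchmidt_def'' ℝ v j

end Gram

theorem transpose_seg_mul_seg_eq_gram (k n : ℕ) (b : Fin n → EuclideanSpace ℝ (Fin k)) (m : ℕ)
    (hm : m ≤ n) : (seg k n b m hm)ᵀ * seg k n b m hm = gram ℝ (b ∘ Fin.castLE hm) := by
  ext a c
  simp [seg, mul_apply, PiLp.inner_apply, mul_comm]

theorem stmt10 (k n : ℕ) (b : Fin n → EuclideanSpace ℝ (Fin k))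
    (hb : LinearIndependent ℝ b)
    (i : ℕ) (hi : i + 1 < n)
    (gs : Fin n → EuclideanSpace ℝ (Fin k)) (hgs : gs = InnerProductSpace.gramSchmidt ℝ b)
    (μ : ℝ)
    (hμ : μ = ⟪b ⟨i + 1, hi⟩, gs ⟨i, Nat.lt_of_succ_lt hi⟩⟫ /
      ⟪gs ⟨i, Nat.lt_of_succ_lt hi⟩, gs ⟨i, Nat.lt_of_succ_lt hi⟩⟫)
    (b' : Fin n → EuclideanSpace ℝ (Fin k))
    (hb' : b' = b ∘ Equiv.swap ⟨i, Nat.lt_of_succ_lt hi⟩ ⟨i + 1, hi⟩) :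
    ((seg k n b' (i + 1) (Nat.lt_of_succ_lt hi)).transpose *
          seg k n b' (i + 1) (Nat.lt_of_succ_lt hi)).det /
        ((seg k n b (i + 1) (Nat.lt_of_succ_lt hi)).transpose *
          seg k n b (i + 1) (Nat.lt_of_succ_lt hi)).det =
      (‖gs ⟨i + 1, hi⟩‖ ^ 2 + μ ^ 2 * ‖gs ⟨i, Nat.lt_of_succ_lt hi⟩‖ ^ 2) /
        ‖gs ⟨i, Nat.lt_of_succ_lt hi⟩‖ ^ 2 := by
  subst hgs hμ hb'
  set hm := Nat.lt_of_succ_lt hi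
  set a : Fin n := ⟨i, hm⟩
  set c : Fin n := ⟨i + 1, hi⟩
  have hac : a ⋖ c := by simp [a, c]
  have hlast : Fin.castLE hm (Fin.last i) = a := rfl
  have hlt (j : Fin i) : Fin.castLE hm j.castSucc < a := j.isLt
  have hP : ∏ j : Fin i, ‖gramSchmidt ℝ b (Fin.castLE hm j.castSucc)‖ ^ 2 ≠ 0 :=
    prod_ne_zero_iff.2 fun j _ => pow_ne_zero _ (norm_ne_zero_iff.2 (gramSchmidt_ne_zero _ hb))
  simp only [transpose_seg_mul_seg_eq_gram, det_gram_eq_prod_norm_sq_gramSchmidt,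
    gramSchmidt_comp_castLE, Fin.prod_univ_castSucc, gramSchmidt_comp_swap_of_lt b hac.lt (hlt _), hlast,
    gramSchmidt_comp_swap_left b hac]
  rw [mul_div_mul_left _ _ hP, norm_add_sq_real, real_inner_smul_right,
    gramSchmidt_orthogonal ℝ b hac.ne', norm_smul, mul_pow, Real.norm_eq_abs, sq_abs,
    real_inner_comm, real_inner_self_eq_norm_sq]
  simp
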